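/- arXiv:1904.09547 — 3 statements merged into one kernel-verified Lean document; each statement's English description precedes it below -/
import Mathlib

section
/- Let (X,T) be a topological dynamical system, μ ∈ M(X,T), and A = {a_i} a strictly increasing sequence with positive upper density. If (X,T) is μ-A-mean-equicontinuous, then (X,B,μ,T) is rigid. -/
/-!
Cover most of `X` by a compact set `K` on which mean equicontinuity along `a` holds, and move
each `x ∈ K` to a centre `ζ x` within `δ`, taken from a finite subset of `K`. By reverse Fatou
the Cesàro means of `c i = ∫_K d(T^(a i) x, T^(a i) (ζ x)) dμ` are small, hence so are infinitely
many `c i`. Among these indices, compactness of `X ^ (range ζ)` yields `i`, `j` with `a j - a i`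
arbitrarily large and the orbits of all centres at times `a i` and `a j` close to each other. The
triangle inequality and the invariance of `μ` then make `∫ d(T^t x, x) dμ` small for
`t = a j - a i`.

Along times `t k` for which these integrals tend to zero, `T^(t k) → id` in measure, so
`g ∘ T^(t k) → g` in `L²` for every bounded continuous `g` (Vitali), and then for every `g ∈ L²`
because bounded continuous functions are dense and each `T^(t k)` preserves the `L²` norm.
-/

open MeasureTheory Filter Topology Finset
open scoped ENNReal NNReal BoundedContinuousFunction

lemma ENNReal.inv_mul_sum_range_le {u : ℕ → ℝ≥0∞} {B : ℝ≥0∞} (h : ∀ i, u i ≤ B) (n : ℕ) :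
    (n : ℝ≥0∞)⁻¹ * ∑ i ∈ range n, u i ≤ B := by
  rcases Nat.eq_zero_or_pos n with rfl | hn
  · simp
  rw [ENNReal.inv_mul_le_iff (by exact_mod_cast hn.ne') (ENNReal.natCast_ne_top n)]
  simpa using Finset.sum_le_card_nsmul (range n) u B fun i _ => h i

lemma ENNReal.frequently_lt_two_mul_of_limsup_inv_mul_sum_lt {u : ℕ → ℝ≥0∞} {r : ℝ≥0∞}
    (h : limsup (fun n : ℕ => (n : ℝ≥0∞)⁻¹ * ∑ i ∈ range n, u i) atTop < r) :
    ∃ᶠ i in atTop, u i < 2 * r := by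
  refine frequently_atTop.2 fun N => ?_
  by_contra! hN
  obtain ⟨n₀, hn₀⟩ := eventually_atTop.1 (eventually_lt_of_limsup_lt h)
  set n := max n₀ (2 * N + 1)
  have h_sum : n * r ≤ ∑ i ∈ range n, u i :=
    calc (n : ℝ≥0∞) * r ≤ (n - N : ℕ) * (2 * r) := by
          rw [← mul_assoc]; gcongr; exact_mod_cast (by omega : n ≤ (n - N) * 2)
      _ = #(Ico N n) • (2 * r) := by rw [Nat.card_Ico, nsmul_eq_mul]
      _ ≤ ∑ i ∈ Ico N n, u i := card_nsmul_le_sum _ _ _ fun i hi => hN i (mem_Ico.1 hi).1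
      _ ≤ ∑ i ∈ range n, u i :=
          sum_le_sum_of_subset (range_eq_Ico n ▸ Ico_subset_Ico_left N.zero_le)
  refine (hn₀ n (le_max_left _ _)).not_ge ?_
  exact (ENNReal.mul_le_iff_le_inv (by positivity) (ENNReal.natCast_ne_top n)).1 h_sum

lemma ENNReal.exists_strictMono_tendsto_zero_of_frequently_le {u : ℕ → ℝ≥0∞}
    (h : ∀ ε > (0 : ℝ), ∃ᶠ n in atTop, u n ≤ ENNReal.ofReal ε) :
    ∃ t : ℕ → ℕ, StrictMono t ∧ Tendsto (u ∘ t) atTop (𝓝 0) := by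
  obtain ⟨t, ht, hut⟩ := extraction_forall_of_frequently fun k : ℕ =>
    h (1 / ((k : ℝ) + 1)) Nat.one_div_pos_of_nat
  refine ⟨t, ht, tendsto_of_tendsto_of_tendsto_of_le_of_le tendsto_const_nhds ?_
    (fun _ => zero_le) hut⟩
  simpa using ENNReal.tendsto_ofReal tendsto_one_div_add_atTop_nhds_zero_nat

lemma exists_add_le_dist_lt_of_frequently {Y : Type*} [PseudoMetricSpace Y] [CompactSpace Y]
    (v : ℕ → Y) {P : ℕ → Prop} (hP : ∃ᶠ i in atTop, P i) {a : ℕ → ℕ}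
    (ha : Tendsto a atTop atTop) {η : ℝ} (hη : 0 < η) (M : ℕ) :
    ∃ i j, P i ∧ P j ∧ a i + M ≤ a j ∧ dist (v j) (v i) < η := by
  obtain ⟨φ, hφ, hPφ⟩ := extraction_of_frequently_atTop hP
  obtain ⟨_, ψ, hψ, hlim⟩ := CompactSpace.tendsto_subseq (v ∘ φ)
  obtain ⟨N, hN⟩ := Metric.cauchySeq_iff'.1 hlim.cauchySeq η hη
  have h_gap : ∀ᶠ n in atTop, a (φ (ψ N)) + M ≤ a (φ (ψ n)) :=
    (ha.comp (hφ.comp hψ).tendsto_atTop).eventually_ge_atTop _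
  obtain ⟨n, hgap, hn⟩ := (h_gap.and (eventually_ge_atTop N)).exists
  exact ⟨_, _, hPφ _, hPφ _, hgap, hN n hn⟩

lemma limsup_inv_mul_sum_edist_le {X : Type*} [PseudoMetricSpace X] {x y : ℕ → X} {B r : ℝ}
    (hB : ∀ i, dist (x i) (y i) ≤ B)
    (h : limsup (fun n : ℕ => (1 / (n : ℝ)) * ∑ i ∈ range n, dist (x i) (y i)) atTop < r) :
    limsup (fun n : ℕ => (n : ℝ≥0∞)⁻¹ * ∑ i ∈ range n, edist (x i) (y i)) atTop
      ≤ ENNReal.ofReal r := by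
  have h_eq : ∀ n : ℕ, ENNReal.ofReal ((1 / (n : ℝ)) * ∑ i ∈ range n, dist (x i) (y i))
      = (n : ℝ≥0∞)⁻¹ * ∑ i ∈ range n, edist (x i) (y i) := fun n => by
    rcases Nat.eq_zero_or_pos n with rfl | hn
    · simp
    rw [ENNReal.ofReal_mul (by positivity), ENNReal.ofReal_sum_of_nonneg fun i _ => dist_nonneg,
      one_div, ENNReal.ofReal_inv_of_pos (by exact_mod_cast hn), ENNReal.ofReal_natCast]
    simp only [edist_dist]
  have hB0 : 0 ≤ B := dist_nonneg.trans (hB 0)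
  have h_bdd : ∀ n : ℕ, (1 / (n : ℝ)) * ∑ i ∈ range n, dist (x i) (y i) ≤ B := fun n => by
    rw [← ENNReal.ofReal_le_ofReal_iff hB0, h_eq]
    refine ENNReal.inv_mul_sum_range_le (fun i => ?_) n
    rw [edist_dist]
    exact ENNReal.ofReal_le_ofReal (hB i)
  refine limsup_le_of_le (by isBoundedDefault) ?_
  filter_upwards [eventually_lt_of_limsup_lt h (isBoundedUnder_of ⟨B, h_bdd⟩)] with n hn
  rw [← h_eq]
  exact ENNReal.ofReal_le_ofReal hn.le

lemma IsCompact.exists_simpleFunc_mem_dist_lt {X : Type*} [MetricSpace X] [MeasurableSpace X]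
    [OpensMeasurableSpace X] {K : Set X} (hK : IsCompact K)
    (hne : K.Nonempty) {δ : ℝ} (hδ : 0 < δ) :
    ∃ ζ : SimpleFunc X X, (∀ x, ζ x ∈ K) ∧ ∀ x ∈ K, dist x (ζ x) < δ := by
  have : Nonempty K := hne.to_subtype
  have : TopologicalSpace.SeparableSpace K := hK.isSeparable.separableSpace
  set e : ℕ → X := fun k => TopologicalSpace.denseSeq K k
  have h_cover : K ⊆ ⋃ N, ⋃ k ≤ N, Metric.ball (e k) δ := fun x hx => by
    obtain ⟨k, hk⟩ := Metric.denseRange_iff.1 (TopologicalSpace.denseRange_denseSeq K) ⟨x, hx⟩ δ hδ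
    exact Set.mem_iUnion.2 ⟨k, Set.mem_iUnion₂.2 ⟨k, le_rfl, Metric.mem_ball.2 hk⟩⟩
  obtain ⟨N, hN⟩ := hK.elim_directed_cover _
    (fun N => isOpen_biUnion fun k _ => Metric.isOpen_ball) h_cover
    (Monotone.directed_le fun _ _ hNN' =>
      Set.biUnion_subset_biUnion_left fun _ hk => le_trans hk hNN')
  refine ⟨SimpleFunc.nearestPt e N, fun x => ?_, fun x hx => ?_⟩
  · simp only [SimpleFunc.nearestPt, SimpleFunc.map_apply]
    exact Subtype.coe_prop _
  · obtain ⟨k, hk, hxk⟩ := Set.mem_iUnion₂.1 (hN hx)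
    rw [dist_comm, ← edist_lt_ofReal]
    exact (SimpleFunc.edist_nearestPt_le e x hk).trans_lt
      (edist_lt_ofReal.2 (Metric.mem_ball'.1 hxk))

namespace MeasureTheory

variable {α ι : Type*} {m : MeasurableSpace α} {μ : Measure α}

lemma tendstoInMeasure_of_tendsto_lintegral_edist {E : Type*} [PseudoEMetricSpace E] {l : Filter ι}
    {f : ι → α → E} {g : α → E} (hf : ∀ i, AEMeasurable (fun x => edist (f i x) (g x)) μ)
    (h : Tendsto (fun i => ∫⁻ x, edist (f i x) (g x) ∂μ) l (𝓝 0)) :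
    TendstoInMeasure μ f l g := by
  refine tendstoInMeasure_of_ne_top fun ε hε hε_top => ?_
  have h_div : Tendsto (fun i => (∫⁻ x, edist (f i x) (g x) ∂μ) / ε) l (𝓝 0) := by
    simpa using ENNReal.Tendsto.div_const h (Or.inr hε.ne')
  exact tendsto_of_tendsto_of_tendsto_of_le_of_le tendsto_const_nhds h_div (fun _ => zero_le)
    fun i => meas_ge_le_lintegral_div (hf i) hε.ne' hε_top

lemma TendstoInMeasure.comp_uniformContinuous {E F : Type*} [PseudoEMetricSpace E]
    [PseudoEMetricSpace F] {l : Filter ι} {f : ι → α → E} {g : α → E} {φ : E → F}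
    (h : TendstoInMeasure μ f l g) (hφ : UniformContinuous φ) :
    TendstoInMeasure μ (fun i x => φ (f i x)) l (fun x => φ (g x)) := by
  intro ε hε
  obtain ⟨δ, hδ, hδε⟩ := EMetric.uniformContinuous_iff.1 hφ ε hε
  refine tendsto_of_tendsto_of_tendsto_of_le_of_le tendsto_const_nhds (h δ hδ)
    (fun _ => zero_le) fun i => measure_mono fun x hx => not_lt.1 fun hlt => hx.not_gt (hδε hlt)

lemma unifIntegrable_of_forall_nnnorm_le {β : Type*} [NormedAddCommGroup β] {p : ℝ≥0∞}
    (hp : 1 ≤ p) (hp' : p ≠ ∞) {f : ι → α → β} (hf : ∀ i, AEStronglyMeasurable (f i) μ)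
    {C : ℝ≥0} (hC : ∀ i x, ‖f i x‖₊ ≤ C) : UnifIntegrable f p μ := by
  refine unifIntegrable_of hp hp' hf fun _ _ => ⟨C + 1, fun i => ?_⟩
  have h_empty : {x | C + 1 ≤ ‖f i x‖₊} = ∅ :=
    Set.eq_empty_of_forall_notMem fun x hx => (lt_add_one C).not_ge (le_trans hx (hC i x))
  simp [h_empty]

lemma BoundedContinuousFunction.tendsto_eLpNorm_comp_sub_of_tendstoInMeasure
    {X E : Type*} [PseudoMetricSpace X] [NormedAddCommGroup E] [IsFiniteMeasure μ]
    {p : ℝ≥0∞} (hp : 1 ≤ p) (hp' : p ≠ ∞) (g : X →ᵇ E) (hg : UniformContinuous g)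
    {φ : ℕ → α → X} {ψ : α → X} (hφ : ∀ k, AEStronglyMeasurable (φ k) μ)
    (hψ : AEStronglyMeasurable ψ μ) (h : TendstoInMeasure μ φ atTop ψ) :
    Tendsto (fun k => eLpNorm (fun x => g (φ k x) - g (ψ x)) p μ) atTop (𝓝 0) := by
  have hgφ : ∀ k, AEStronglyMeasurable (fun x => g (φ k x)) μ :=
    fun k => g.continuous.comp_aestronglyMeasurable (hφ k)
  have hgψ : AEStronglyMeasurable (fun x => g (ψ x)) μ :=
    g.continuous.comp_aestronglyMeasurable hψ
  exact tendsto_Lp_finite_of_tendstoInMeasure hp hp' hgφ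
    (MemLp.of_bound hgψ ‖g‖ (ae_of_all _ fun x => g.norm_coe_le_norm (ψ x)))
    (unifIntegrable_of_forall_nnnorm_le hp hp' hgφ fun k x => g.nnnorm_coe_le_nnnorm (φ k x))
    (h.comp_uniformContinuous hg)

lemma tendsto_eLpNorm_comp_sub_of_forall_boundedContinuous {X E : Type*} [TopologicalSpace X]
    [NormalSpace X] [MeasurableSpace X] [BorelSpace X] [NormedAddCommGroup E] [NormedSpace ℝ E]
    {μ : Measure X} [μ.WeaklyRegular] {p : ℝ≥0∞} (hp : 1 ≤ p) (hp' : p ≠ ∞) {l : Filter ι}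
    {φ : ι → X → X} (hφ : ∀ i, MeasurePreserving (φ i) μ μ)
    (h : ∀ g : X →ᵇ E, Tendsto (fun i => eLpNorm (fun x => g (φ i x) - g x) p μ) l (𝓝 0))
    {f : X → E} (hf : MemLp f p μ) :
    Tendsto (fun i => eLpNorm (fun x => f (φ i x) - f x) p μ) l (𝓝 0) := by
  refine ENNReal.tendsto_nhds_zero.2 fun ε hε => ?_
  have hε3 : 0 < ε / 3 := ENNReal.div_pos hε.ne' (by norm_num)
  obtain ⟨g, hfg, hg⟩ := hf.exists_boundedContinuous_eLpNorm_sub_le hp' hε3.ne'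
  have hfg_meas : AEStronglyMeasurable (f - ⇑g) μ := hf.1.sub hg.1
  filter_upwards [ENNReal.tendsto_nhds_zero.1 (h g) (ε / 3) hε3] with i hi
  have h_split : (fun x => f (φ i x) - f x)
      = ((f - ⇑g) ∘ φ i + fun x => g (φ i x) - g x) - (f - ⇑g) := by
    ext x
    simp only [Pi.sub_apply, Pi.add_apply, Function.comp_apply]
    abel
  have h_comp : eLpNorm ((f - ⇑g) ∘ φ i) p μ = eLpNorm (f - ⇑g) p μ :=
    eLpNorm_comp_measurePreserving hfg_meas (hφ i)
  have hgφ : AEStronglyMeasurable (fun x => g (φ i x) - g x) μ :=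
    (hg.1.comp_measurePreserving (hφ i)).sub hg.1
  calc eLpNorm (fun x => f (φ i x) - f x) p μ
      ≤ eLpNorm ((f - ⇑g) ∘ φ i) p μ + eLpNorm (fun x => g (φ i x) - g x) p μ
        + eLpNorm (f - ⇑g) p μ := by
        rw [h_split]
        refine (eLpNorm_sub_le ?_ hfg_meas hp).trans (add_le_add_left ?_ _)
        · exact (hfg_meas.comp_measurePreserving (hφ i)).add hgφ
        · exact eLpNorm_add_le (hfg_meas.comp_measurePreserving (hφ i)) hgφ hp
    _ ≤ ε / 3 + ε / 3 + ε / 3 := by rw [h_comp]; gcongr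
    _ = ε := ENNReal.add_thirds ε

lemma tendsto_eLpNorm_comp_sub_of_tendsto_lintegral_edist {X E : Type*} [MetricSpace X]
    [CompactSpace X] [MeasurableSpace X] [BorelSpace X] [NormedAddCommGroup E] [NormedSpace ℝ E]
    {μ : Measure X} [IsFiniteMeasure μ] {p : ℝ≥0∞} (hp : 1 ≤ p) (hp' : p ≠ ∞)
    {φ : ℕ → X → X} (hφ : ∀ k, MeasurePreserving (φ k) μ μ)
    (h : Tendsto (fun k => ∫⁻ x, edist (φ k x) x ∂μ) atTop (𝓝 0)) {f : X → E}
    (hf : MemLp f p μ) :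
    Tendsto (fun k => eLpNorm (fun x => f (φ k x) - f x) p μ) atTop (𝓝 0) := by
  have h_meas : TendstoInMeasure μ φ atTop id :=
    tendstoInMeasure_of_tendsto_lintegral_edist
      (fun k => ((hφ k).measurable.edist measurable_id).aemeasurable) h
  refine tendsto_eLpNorm_comp_sub_of_forall_boundedContinuous hp hp' hφ (fun g => ?_) hf
  exact g.tendsto_eLpNorm_comp_sub_of_tendstoInMeasure hp hp'
    (CompactSpace.uniformContinuous_of_continuous g.continuous)
    (fun k => (hφ k).measurable.aestronglyMeasurable) aestronglyMeasurable_id h_meas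

lemma limsup_inv_mul_sum_lintegral_le {ν : Measure α}
    [IsFiniteMeasure ν] {F : ℕ → α → ℝ≥0∞} (hF : ∀ i, Measurable (F i)) {B : ℝ≥0∞} (hB : B ≠ ∞)
    (hFB : ∀ i x, F i x ≤ B) {r : ℝ≥0∞}
    (hr : ∀ᵐ x ∂ν, limsup (fun n : ℕ => (n : ℝ≥0∞)⁻¹ * ∑ i ∈ range n, F i x) atTop ≤ r) :
    limsup (fun n : ℕ => (n : ℝ≥0∞)⁻¹ * ∑ i ∈ range n, ∫⁻ x, F i x ∂ν) atTop ≤ r * ν Set.univ := by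
  have h_meas : ∀ n : ℕ, Measurable fun x => (n : ℝ≥0∞)⁻¹ * ∑ i ∈ range n, F i x :=
    fun n => (Finset.measurable_sum _ fun i _ => hF i).const_mul _
  have h_avg : ∀ n : ℕ, (n : ℝ≥0∞)⁻¹ * ∑ i ∈ range n, ∫⁻ x, F i x ∂ν
      = ∫⁻ x, (n : ℝ≥0∞)⁻¹ * ∑ i ∈ range n, F i x ∂ν := fun n => by
    rw [← lintegral_finsetSum _ fun i _ => hF i,
      ← lintegral_const_mul _ (Finset.measurable_sum _ fun i _ => hF i)]
  calc limsup (fun n : ℕ => (n : ℝ≥0∞)⁻¹ * ∑ i ∈ range n, ∫⁻ x, F i x ∂ν) atTop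
      ≤ ∫⁻ x, limsup (fun n : ℕ => (n : ℝ≥0∞)⁻¹ * ∑ i ∈ range n, F i x) atTop ∂ν := by
        simp_rw [h_avg]
        exact limsup_lintegral_le (fun _ => B) h_meas
          (fun n => ae_of_all _ fun x => ENNReal.inv_mul_sum_range_le (fun i => hFB i x) n)
          (by simp [lintegral_const, ENNReal.mul_eq_top, hB])
    _ ≤ ∫⁻ _, r ∂ν := lintegral_mono_ae hr
    _ = r * ν Set.univ := lintegral_const r

lemma prob_compl_le_ofReal_of_ofReal_one_sub_lt [IsProbabilityMeasure μ] {K : Set α}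
    (hK : MeasurableSet K) {τ : ℝ} (h : ENNReal.ofReal (1 - τ) < μ K) :
    μ Kᶜ ≤ ENNReal.ofReal τ := by
  rw [prob_compl_eq_one_sub hK, tsub_le_iff_right]
  calc (1 : ℝ≥0∞) = ENNReal.ofReal (τ + (1 - τ)) := by simp
    _ ≤ ENNReal.ofReal τ + ENNReal.ofReal (1 - τ) := ENNReal.ofReal_add_le
    _ ≤ ENNReal.ofReal τ + μ K := by gcongr

section

variable {X : Type*} [PseudoEMetricSpace X] [MeasurableSpace X] [OpensMeasurableSpace X]
  [SecondCountableTopology X] {μ : Measure X}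

lemma lintegral_edist_le_of_edist_comp_le [IsProbabilityMeasure μ] {K : Set X}
    (hK : MeasurableSet K) {f g ζ : X → X} (hg : Measurable g)
    (hζ : Measurable ζ) {η B : ℝ≥0∞} (hη : ∀ x, edist (f (ζ x)) (g (ζ x)) ≤ η)
    (hB : ∀ x y : X, edist x y ≤ B) :
    ∫⁻ x, edist (f x) (g x) ∂μ ≤ ∫⁻ x in K, edist (f x) (f (ζ x)) ∂μ + η
      + ∫⁻ x in K, edist (g x) (g (ζ x)) ∂μ + B * μ Kᶜ := by
  have h_tri : ∀ x, edist (f x) (g x) ≤ edist (f x) (f (ζ x)) + η + edist (g x) (g (ζ x)) :=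
    fun x => by
      calc edist (f x) (g x) ≤ edist (f x) (f (ζ x)) + edist (f (ζ x)) (g (ζ x))
            + edist (g (ζ x)) (g x) := edist_triangle4 _ _ _ _
        _ ≤ _ := by rw [edist_comm (g (ζ x))]; gcongr; exact hη x
  rw [← lintegral_add_compl _ hK]
  gcongr
  · calc ∫⁻ x in K, edist (f x) (g x) ∂μ
        ≤ ∫⁻ x in K, (edist (f x) (f (ζ x)) + η + edist (g x) (g (ζ x))) ∂μ :=
          lintegral_mono h_tri
      _ = ∫⁻ x in K, edist (f x) (f (ζ x)) ∂μ + η * μ K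
          + ∫⁻ x in K, edist (g x) (g (ζ x)) ∂μ := by
          have hgζ : Measurable fun x => edist (g x) (g (ζ x)) := hg.edist (hg.comp hζ)
          rw [lintegral_add_right _ hgζ,
            lintegral_add_right _ measurable_const, setLIntegral_const]
      _ ≤ _ := by gcongr; exact mul_le_of_le_one_right' prob_le_one
  · exact (lintegral_mono fun x => hB _ _).trans (setLIntegral_const _ _).le

lemma MeasurePreserving.lintegral_edist_iterate_sub {T : X → X} (hT : MeasurePreserving T μ μ)
    {p q : ℕ} (hpq : p ≤ q) :
    ∫⁻ x, edist (T^[q - p] x) x ∂μ = ∫⁻ x, edist (T^[q] x) (T^[p] x) ∂μ := by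
  have h_meas : Measurable fun x => edist (T^[q - p] x) x :=
    (hT.iterate _).measurable.edist measurable_id
  rw [← (hT.iterate p).lintegral_comp h_meas]
  simp only [← Function.iterate_add_apply, Nat.sub_add_cancel hpq]

end

end MeasureTheory

lemma limsup_inv_mul_sum_setLIntegral_edist_le {X : Type*} [MetricSpace X] [CompactSpace X]
    [MeasurableSpace X] [BorelSpace X] {μ : Measure X} [IsFiniteMeasure μ] {K : Set X}
    (hK : MeasurableSet K) {x y : ℕ → X → X} (hx : ∀ i, Measurable (x i))
    (hy : ∀ i, Measurable (y i)) {r : ℝ}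
    (h : ∀ z ∈ K, limsup (fun n : ℕ => (1 / (n : ℝ)) *
      ∑ i ∈ range n, dist (x i z) (y i z)) atTop < r) :
    limsup (fun n : ℕ => (n : ℝ≥0∞)⁻¹ *
      ∑ i ∈ range n, ∫⁻ z in K, edist (x i z) (y i z) ∂μ) atTop ≤ ENNReal.ofReal r * μ K := by
  set B := Metric.ediam (Set.univ : Set X)
  have hB : B ≠ ∞ := Metric.isBounded_iff_ediam_ne_top.1 isCompact_univ.isBounded
  have hB_le : ∀ z w : X, edist z w ≤ B := fun z w =>
    Metric.edist_le_ediam_of_mem (Set.mem_univ z) (Set.mem_univ w)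
  have h_pt : ∀ z ∈ K, limsup (fun n : ℕ => (n : ℝ≥0∞)⁻¹ *
      ∑ i ∈ range n, edist (x i z) (y i z)) atTop ≤ ENNReal.ofReal r := fun z hz =>
    limsup_inv_mul_sum_edist_le
      (fun i => dist_edist (x i z) (y i z) ▸ ENNReal.toReal_mono hB (hB_le _ _)) (h z hz)
  rw [← Measure.restrict_apply_univ]
  exact limsup_inv_mul_sum_lintegral_le (fun i => (hx i).edist (hy i)) hB (fun _ _ => hB_le _ _)
    (ae_restrict_of_forall_mem hK h_pt)

def MeanEquicontinuousOnAlong {X : Type*} [MetricSpace X] (K : Set X) (T : X → X)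
    (a : ℕ → ℕ) : Prop :=
  ∀ ε > (0 : ℝ), ∃ δ > (0 : ℝ), ∀ x ∈ K, ∀ y ∈ K, dist x y < δ →
    limsup (fun n : ℕ => (1 / (n : ℝ)) *
      ∑ i ∈ Finset.range n, dist (T^[a i] x) (T^[a i] y)) atTop < ε

/-- The paper's `μ`-`A`-mean-equicontinuity, for `A = {a i}`. -/
def MeanEquicontinuousAlong {X : Type*} [MetricSpace X] [MeasurableSpace X] (μ : Measure X)
    (T : X → X) (a : ℕ → ℕ) : Prop :=
  ∀ τ > (0 : ℝ), ∃ K : Set X, IsCompact K ∧ μ K > ENNReal.ofReal (1 - τ) ∧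
    MeanEquicontinuousOnAlong K T a

section

variable {X : Type*} [MetricSpace X] [CompactSpace X] [MeasurableSpace X] [BorelSpace X]
  {μ : Measure X} [IsProbabilityMeasure μ] {T : X → X} {a : ℕ → ℕ}

theorem MeanEquicontinuousOnAlong.exists_simpleFunc_frequently_setLIntegral_edist_lt {K : Set X}
    (h : MeanEquicontinuousOnAlong K T a) (hK : IsCompact K) (hne : K.Nonempty)
    (hT : Measurable T) {ε : ℝ} (hε : 0 < ε) :
    ∃ ζ : SimpleFunc X X, ∃ᶠ i in atTop,
      ∫⁻ x in K, edist (T^[a i] x) (T^[a i] (ζ x)) ∂μ < ENNReal.ofReal ε := by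
  obtain ⟨δ, hδ, hδK⟩ := h (ε / 4) (by positivity)
  obtain ⟨ζ, hζK, hζ⟩ := hK.exists_simpleFunc_mem_dist_lt hne hδ
  refine ⟨ζ, ?_⟩
  have h_cesaro : limsup (fun n : ℕ => (n : ℝ≥0∞)⁻¹ *
      ∑ i ∈ range n, ∫⁻ x in K, edist (T^[a i] x) (T^[a i] (ζ x)) ∂μ) atTop
      < ENNReal.ofReal (ε / 2) :=
    calc _ ≤ ENNReal.ofReal (ε / 4) * μ K :=
          limsup_inv_mul_sum_setLIntegral_edist_le hK.measurableSet (fun _ => hT.iterate _)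
            (fun _ => (hT.iterate _).comp ζ.measurable)
            fun x hx => hδK x hx (ζ x) (hζK x) (hζ x hx)
      _ ≤ ENNReal.ofReal (ε / 4) := mul_le_of_le_one_right' prob_le_one
      _ < ENNReal.ofReal (ε / 2) := (ENNReal.ofReal_lt_ofReal_iff (by positivity)).2 (by linarith)
  have h_two : 2 * ENNReal.ofReal (ε / 2) = ENNReal.ofReal ε := by
    rw [← ENNReal.ofReal_ofNat, ← ENNReal.ofReal_mul zero_le_two]; ring_nf
  simpa only [h_two] using ENNReal.frequently_lt_two_mul_of_limsup_inv_mul_sum_lt h_cesaro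

theorem MeanEquicontinuousAlong.frequently_lintegral_edist_iterate_le
    (h : MeanEquicontinuousAlong μ T a) (hT : MeasurePreserving T μ μ) (ha : StrictMono a)
    {ε : ℝ} (hε : 0 < ε) :
    ∃ᶠ t in atTop, ∫⁻ x, edist (T^[t] x) x ∂μ ≤ ENNReal.ofReal ε := by
  set B := Metric.ediam (Set.univ : Set X)
  have hB : B ≠ ∞ := Metric.isBounded_iff_ediam_ne_top.1 isCompact_univ.isBounded
  obtain ⟨τ, hτ, hBτ⟩ := exists_pos_mul_lt (by positivity : 0 < ε / 4) B.toReal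
  obtain ⟨K, hK, hμK, hK_eq⟩ := h τ hτ
  have hμKc : B * μ Kᶜ ≤ ENNReal.ofReal (ε / 4) :=
    calc B * μ Kᶜ ≤ ENNReal.ofReal B.toReal * ENNReal.ofReal τ := by
          rw [ENNReal.ofReal_toReal hB]
          gcongr
          exact prob_compl_le_ofReal_of_ofReal_one_sub_lt hK.measurableSet hμK
      _ ≤ ENNReal.ofReal (ε / 4) := by
          rw [← ENNReal.ofReal_mul ENNReal.toReal_nonneg]
          exact ENNReal.ofReal_le_ofReal hBτ.le
  obtain ⟨ζ, hζ⟩ := hK_eq.exists_simpleFunc_frequently_setLIntegral_edist_lt (μ := μ) hK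
    (nonempty_of_measure_ne_zero (ne_bot_of_gt hμK)) hT.measurable (by positivity : 0 < ε / 4)
  refine frequently_atTop.2 fun M => ?_
  obtain ⟨i, j, hi, hj, hij, hclose⟩ := exists_add_le_dist_lt_of_frequently
    (fun i (y : ζ.range) => T^[a i] y) hζ ha.tendsto_atTop (by positivity : 0 < ε / 4) M
  have h_mid : ∀ x, edist (T^[a j] (ζ x)) (T^[a i] (ζ x)) ≤ ENNReal.ofReal (ε / 4) := fun x => by
    rw [edist_dist]
    exact ENNReal.ofReal_le_ofReal
      ((dist_le_pi_dist _ _ (⟨ζ x, ζ.mem_range_self x⟩ : ζ.range)).trans hclose.le)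
  refine ⟨a j - a i, by omega, ?_⟩
  rw [hT.lintegral_edist_iterate_sub (by omega)]
  calc ∫⁻ x, edist (T^[a j] x) (T^[a i] x) ∂μ
      ≤ _ := lintegral_edist_le_of_edist_comp_le hK.measurableSet (hT.iterate _).measurable
          ζ.measurable h_mid fun x y =>
            Metric.edist_le_ediam_of_mem (Set.mem_univ x) (Set.mem_univ y)
    _ ≤ ENNReal.ofReal (ε / 4) + ENNReal.ofReal (ε / 4) + ENNReal.ofReal (ε / 4)
        + ENNReal.ofReal (ε / 4) := by gcongr
    _ = ENNReal.ofReal ε := by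
        have hε4 : 0 ≤ ε / 4 := by positivity
        rw [← ENNReal.ofReal_add hε4 hε4, ← ENNReal.ofReal_add (by positivity) hε4,
          ← ENNReal.ofReal_add (by positivity) hε4]
        ring_nf

end

open Classical in
theorem stmt16_general {X : Type*} [MetricSpace X] [CompactSpace X] [MeasurableSpace X]
    [BorelSpace X] (μ : Measure X) [IsProbabilityMeasure μ] (T : X ≃ₜ X)
    (hT : MeasurePreserving T μ μ)
    (a : ℕ → ℕ) (ha : StrictMono a)
    (hmec : ∀ τ > (0 : ℝ), ∃ K : Set X, IsCompact K ∧
      μ K > ENNReal.ofReal (1 - τ) ∧ ∀ ε > (0 : ℝ), ∃ δ > (0 : ℝ),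
      ∀ x ∈ K, ∀ y ∈ K, dist x y < δ →
        limsup (fun n : ℕ => (1 / (n : ℝ)) *
          ∑ i ∈ Finset.range n, dist ((⇑T)^[a i] x) ((⇑T)^[a i] y)) atTop < ε) :
    ∃ t : ℕ → ℕ, StrictMono t ∧ ∀ f : X → ℝ, MemLp f 2 μ →
      Tendsto (fun k => eLpNorm (fun x => f ((⇑T)^[t k] x) - f x) 2 μ)
        atTop (𝓝 0) := by
  obtain ⟨t, ht, h_return⟩ := ENNReal.exists_strictMono_tendsto_zero_of_frequently_le fun ε hε =>
    MeanEquicontinuousAlong.frequently_lintegral_edist_iterate_le hmec hT ha hε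
  exact ⟨t, ht, fun f hf => tendsto_eLpNorm_comp_sub_of_tendsto_lintegral_edist one_le_two
    ENNReal.ofNat_ne_top (fun k => hT.iterate (t k)) h_return hf⟩

open Classical in
theorem stmt16 {X : Type*} [MetricSpace X] [CompactSpace X] [MeasurableSpace X]
    [BorelSpace X] (μ : Measure X) [IsProbabilityMeasure μ] (T : X ≃ₜ X)
    (hT : MeasurePreserving T μ μ)
    (a : ℕ → ℕ) (ha : StrictMono a)
    (hdens : (0 : ℝ) < limsup (fun n : ℕ =>
      (((Finset.range n).filter (fun m => m ∈ Set.range a)).card : ℝ) / n) atTop)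
    (hmec : ∀ τ > (0 : ℝ), ∃ K : Set X, IsCompact K ∧
      μ K > ENNReal.ofReal (1 - τ) ∧ ∀ ε > (0 : ℝ), ∃ δ > (0 : ℝ),
      ∀ x ∈ K, ∀ y ∈ K, dist x y < δ →
        limsup (fun n : ℕ => (1 / (n : ℝ)) *
          ∑ i ∈ Finset.range n, dist ((⇑T)^[a i] x) ((⇑T)^[a i] y)) atTop < ε) :
    ∃ t : ℕ → ℕ, StrictMono t ∧ ∀ f : X → ℝ, MemLp f 2 μ →
      Tendsto (fun k => eLpNorm (fun x => f ((⇑T)^[t k] x) - f x) 2 μ)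
        atTop (𝓝 0) :=
  stmt16_general μ T hT a ha hmec
end

section
/- Let (X,T) be a topological dynamical system, μ ∈ M(X,T), f ∈ L²(μ), and A = {a_i} a strictly increasing sequence such that the pseudo-metric functions (x,y) ↦ |f(T^{a_n}x) − f(T^{a_n}y)| converge μ×μ-almost everywhere to |f(x) − f(y)|. Then f is μ-A-equicontinuous. -/
/-!
Replace `f` by a Borel representative `F`; since `T` preserves `μ`, `f ∘ T^k = F ∘ T^k` almost
everywhere for every `k` at once, so it suffices to treat `F`.

Fix `ε`. By the hypothesis, outside a set of pairs of small `μ × μ`-measure we have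
`d_{a_n} < d_F + ε` for all `n ≥ N`, and by Fubini and Markov most points `x` have a fibre
`{z | d_{a_n}(x, z) < d_F(x, z) + ε for all n ≥ N}` of almost full measure. Almost every `x` has
`μ {z | |F z - F x| < ε} > 0` (`F x` lies in the support of `F_* μ`), so off a small set this
measure is at least some `m > 0`. For two points `x, y` with these properties the three sets meet
in some `z`, and the triangle inequality through `z` gives `d_{a_n}(x, y) < d_F(x, y) + 4ε` for
all `n ≥ N`. Lusin's theorem makes `F` and the finitely many `F ∘ T^{a_n}`, `n < N`, uniformly
continuous on a large compact set.
-/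

open MeasureTheory Filter Topology Metric
open scoped ENNReal BoundedContinuousFunction

section Measure

variable {α : Type*} [MeasurableSpace α] {μ : Measure α}

lemma measure_compl_inter_le (s t : Set α) : μ (s ∩ t)ᶜ ≤ μ sᶜ + μ tᶜ := by
  rw [Set.compl_inter]
  exact measure_union_le _ _

lemma exists_mem_notMem_notMem_of_measure_add_lt {s t₁ t₂ : Set α} (h : μ t₁ + μ t₂ < μ s) :
    ∃ z ∈ s, z ∉ t₁ ∧ z ∉ t₂ := by
  by_contra! hs
  exact (measure_mono fun z hz => or_iff_not_imp_left.2 (hs z hz)).trans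
    (measure_union_le t₁ t₂) |>.not_gt h

lemma Antitone.exists_measure_lt [IsFiniteMeasure μ] {s : ℕ → Set α}
    (hs : ∀ n, NullMeasurableSet (s n) μ) (hanti : Antitone s) (hnull : μ (⋂ n, s n) = 0)
    {γ : ℝ≥0∞} (hγ : γ ≠ 0) : ∃ n, μ (s n) < γ := by
  have h := tendsto_measure_iInter_atTop hs hanti ⟨0, measure_ne_top μ _⟩
  rw [hnull] at h
  exact (h.eventually (gt_mem_nhds (pos_iff_ne_zero.2 hγ))).exists

lemma measurableSet_setOf_exists_ge_not {P : ℕ → α → Prop} (hP : ∀ n, MeasurableSet {x | P n x})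
    (N : ℕ) : MeasurableSet {x | ∃ n ≥ N, ¬P n x} := by
  simp only [Set.ofPred_exists]
  exact .iUnion fun n => (MeasurableSet.const (n ≥ N)).inter (hP n).compl

lemma exists_measure_setOf_exists_ge_not_lt [IsFiniteMeasure μ] {P : ℕ → α → Prop}
    (hP : ∀ n, MeasurableSet {x | P n x}) (h : ∀ᵐ x ∂μ, ∀ᶠ n in atTop, P n x)
    {γ : ℝ≥0∞} (hγ : γ ≠ 0) : ∃ N, μ {x | ∃ n ≥ N, ¬P n x} < γ := by
  refine Antitone.exists_measure_lt
    (fun N => (measurableSet_setOf_exists_ge_not hP N).nullMeasurableSet)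
    (fun N M hNM x ⟨n, hn, hPn⟩ => ⟨n, hNM.trans hn, hPn⟩) ?_ hγ
  refine measure_mono_null (fun x hx => ?_) (ae_iff.1 h)
  exact not_eventually.2 (frequently_atTop.2 fun N => Set.mem_iInter.1 hx N)

lemma exists_measure_setOf_lt_lt_of_ae_pos [IsFiniteMeasure μ] {φ : α → ℝ≥0∞}
    (hφ : Measurable φ) (h : ∀ᵐ x ∂μ, 0 < φ x) {β : ℝ≥0∞} (hβ : β ≠ 0) :
    ∃ m ≠ 0, m ≠ ∞ ∧ μ {x | φ x < m} < β := by
  set s : ℕ → Set α := fun n => {x | φ x < ((n + 1 : ℕ) : ℝ≥0∞)⁻¹}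
  have hnull : μ (⋂ n, s n) = 0 := by
    refine measure_mono_null (fun x hx => ?_) (ae_iff.1 h)
    intro hpos
    obtain ⟨k, hk⟩ := ENNReal.exists_inv_nat_lt hpos.ne'
    exact (Set.mem_iInter.1 hx k).not_ge <| le_of_lt <| lt_of_le_of_lt
      (ENNReal.inv_le_inv.2 (by exact_mod_cast k.le_succ)) hk
  obtain ⟨n, hn⟩ := Antitone.exists_measure_lt (fun n => (hφ measurableSet_Iio).nullMeasurableSet)
    (fun n k hnk x hx =>
      hx.trans_le (ENNReal.inv_le_inv.2 (by exact_mod_cast Nat.succ_le_succ hnk)))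
    hnull hβ
  exact ⟨_, ENNReal.inv_ne_zero.2 (ENNReal.natCast_ne_top _), ENNReal.inv_ne_top.2 (by simp), hn⟩

lemma measure_setOf_le_measure_prodMk_preimage_le_div {β : Type*} [MeasurableSpace β]
    {ν : Measure β} [SFinite ν] {s : Set (α × β)} (hs : MeasurableSet s) {c : ℝ≥0∞}
    (hc0 : c ≠ 0) (hc : c ≠ ∞) : μ {x | c ≤ ν (Prod.mk x ⁻¹' s)} ≤ μ.prod ν s / c := by
  rw [Measure.prod_apply hs]
  exact meas_ge_le_lintegral_div (measurable_measure_prodMk_left hs).aemeasurable hc0 hc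

lemma MeasureTheory.MeasurePreserving.ae_forall_iterate_eq {Y : Type*} {T : α → α}
    (hT : MeasurePreserving T μ μ) {f F : α → Y} (h : f =ᵐ[μ] F) :
    ∀ᵐ x ∂μ, ∀ k, f (T^[k] x) = F (T^[k] x) :=
  ae_all_iff.2 fun k => (hT.iterate k).quasiMeasurePreserving.ae h

lemma ofReal_one_sub_lt_of_measure_compl_lt [IsProbabilityMeasure μ] {K : Set α}
    (hK : MeasurableSet K) {τ : ℝ} (hτ : 0 ≤ τ) (h : μ Kᶜ < min (ENNReal.ofReal τ) 1) :
    ENNReal.ofReal (1 - τ) < μ K := by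
  rw [prob_compl_eq_one_sub hK] at h
  calc ENNReal.ofReal (1 - τ) = 1 - ENNReal.ofReal τ := by
        rw [ENNReal.ofReal_sub _ hτ, ENNReal.ofReal_one]
    _ ≤ 1 - min (ENNReal.ofReal τ) 1 := tsub_le_tsub_left (min_le_left _ _) 1
    _ < μ K := ENNReal.sub_lt_of_sub_lt (min_le_right _ _) (.inl ENNReal.one_ne_top) h

end Measure

section Lusin

variable {α : Type*} [TopologicalSpace α] [MeasurableSpace α] {μ : Measure α} [μ.WeaklyRegular]

lemma MeasurableSet.exists_isClosed_measure_compl_lt [IsFiniteMeasure μ] [OpensMeasurableSpace α]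
    {s : Set α} (hs : MeasurableSet s) {β : ℝ≥0∞} (hβ : μ sᶜ < β) :
    ∃ K ⊆ s, IsClosed K ∧ μ Kᶜ < β := by
  obtain ⟨K, hKs, hK, hsK⟩ :=
    hs.exists_isClosed_sdiff_lt (measure_ne_top μ s) (tsub_pos_of_lt hβ).ne'
  refine ⟨K, hKs, hK, ?_⟩
  calc μ Kᶜ ≤ μ (sᶜ ∪ s \ K) := measure_mono fun x hx => by by_cases x ∈ s <;> simp_all
    _ ≤ μ sᶜ + μ (s \ K) := measure_union_le _ _
    _ < μ sᶜ + (β - μ sᶜ) := ENNReal.add_lt_add_left (measure_ne_top μ _) hsK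
    _ = β := add_tsub_cancel_of_le hβ.le

variable [NormalSpace α] [BorelSpace α] {E : Type*} [NormedAddCommGroup E] [NormedSpace ℝ E]
  [SecondCountableTopologyEither α E] {p : ℝ≥0∞} {f : α → E}

theorem MeasureTheory.MemLp.exists_seq_continuous_tendsto_ae (hp0 : p ≠ 0) (hp : p ≠ ∞)
    (hf : MemLp f p μ) :
    ∃ φ : ℕ → α → E, (∀ n, Continuous (φ n)) ∧ ∀ᵐ x ∂μ, Tendsto (φ · x) atTop (𝓝 (f x)) := by
  have hφ (k : ℕ) : ∃ φ : α →ᵇ E, eLpNorm ((φ : α → E) - f) p μ ≤ (k : ℝ≥0∞)⁻¹ := by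
    obtain ⟨φ, hφ, -⟩ := hf.exists_boundedContinuous_eLpNorm_sub_le hp
      (ENNReal.inv_ne_zero.2 (ENNReal.natCast_ne_top k))
    exact ⟨φ, eLpNorm_sub_comm f φ p μ ▸ hφ⟩
  choose φ hφ using hφ
  have hconv : TendstoInMeasure μ (fun k => (φ k : α → E)) atTop f :=
    tendstoInMeasure_of_tendsto_eLpNorm hp0 (fun k => (φ k).continuous.aestronglyMeasurable) hf.1
      (tendsto_of_tendsto_of_tendsto_of_le_of_le tendsto_const_nhds
        ENNReal.tendsto_inv_nat_nhds_zero (fun _ => bot_le) hφ)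
  obtain ⟨ns, -, hns⟩ := hconv.exists_seq_tendsto_ae
  exact ⟨fun n => φ (ns n), fun n => (φ (ns n)).continuous, hns⟩

theorem MeasureTheory.MemLp.exists_isClosed_measure_compl_lt_continuousOn [IsFiniteMeasure μ]
    (hp0 : p ≠ 0) (hp : p ≠ ∞) (hf : MemLp f p μ) {β : ℝ≥0∞} (hβ : β ≠ 0) :
    ∃ K, IsClosed K ∧ μ Kᶜ < β ∧ ContinuousOn f K := by
  obtain ⟨φ, hφ, hφf⟩ := hf.exists_seq_continuous_tendsto_ae hp0 hp
  obtain ⟨r, -, hr, hrβ⟩ := ENNReal.lt_iff_exists_real_btwn.1 (pos_iff_ne_zero.2 hβ)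
  -- Egorov's theorem needs a strongly measurable limit: it is applied to the representative
  -- `hf.1.mk f`, which agrees with `f` off the null set `B`.
  obtain ⟨t, ht, htr, hunif⟩ := tendstoUniformlyOn_of_ae_tendsto'
    (fun n => (hφ n).stronglyMeasurable) hf.1.stronglyMeasurable_mk
    (by filter_upwards [hφf, hf.1.ae_eq_mk] with x hx hfx; rwa [← hfx]) (ENNReal.ofReal_pos.1 hr)
  set B := toMeasurable μ {x | f x ≠ hf.1.mk f x}
  have hB : μ B = 0 := by rw [measure_toMeasurable]; exact ae_iff.1 hf.1.ae_eq_mk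
  obtain ⟨K, hK, hKc, hKβ⟩ := (ht.union (measurableSet_toMeasurable μ _)).compl
    |>.exists_isClosed_measure_compl_lt (β := β) (by
      rw [compl_compl]
      exact (measure_union_le t B).trans_lt (by rw [hB, add_zero]; exact htr.trans_lt hrβ))
  refine ⟨K, hKc, hKβ, ?_⟩
  have hcont := hunif.continuousOn (.of_forall fun n => (hφ n).continuousOn)
  refine (hcont.mono fun x hx hxt => hK hx (Or.inl hxt)).congr fun x hx => ?_
  by_contra hne
  exact hK hx (Or.inr (subset_toMeasurable μ _ hne))

end Lusin

section Pseudometric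

variable {α : Type*} [MeasurableSpace α] {μ : Measure α}

lemma dist_lt_dist_add_of_dist_lt_dist_add {Y : Type*} [PseudoMetricSpace Y] {x y z x' y' z' : Y}
    {w : ℝ} (hx : dist x' z' < dist x z + w) (hy : dist y' z' < dist y z + w) (hz : dist x z < w) :
    dist x' y' < dist x y + 4 * w := by
  have := dist_triangle_right x' y' z'
  have := dist_triangle_left y z x
  linarith

lemma ae_pos_measure_preimage_of_mem_nhds {Y : Type*} [TopologicalSpace Y] [MeasurableSpace Y]
    [HereditarilyLindelofSpace Y] [OpensMeasurableSpace Y] {g : α → Y} (hg : AEMeasurable g μ) :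
    ∀ᵐ x ∂μ, ∀ U ∈ 𝓝 (g x), 0 < μ (g ⁻¹' U) := by
  filter_upwards [ae_of_ae_map hg Measure.support_mem_ae] with x hx U hU
  obtain ⟨V, hVU, hV, hxV⟩ := mem_nhds_iff.1 hU
  calc 0 < μ.map g V := (Measure.mem_support_iff_forall _).1 hx V (hV.mem_nhds hxV)
    _ = μ (g ⁻¹' V) := Measure.map_apply_of_aemeasurable hg hV.measurableSet
    _ ≤ μ (g ⁻¹' U) := measure_mono (Set.preimage_mono hVU)

variable {Y : Type*} [PseudoMetricSpace Y] [SecondCountableTopology Y] [MeasurableSpace Y]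
  [OpensMeasurableSpace Y]

lemma measurable_measure_preimage_ball [SFinite μ] {g : α → Y} (hg : Measurable g) (w : ℝ) :
    Measurable fun x => μ (g ⁻¹' ball (g x) w) :=
  measurable_measure_prodMk_left (ν := μ) (s := {q : α × α | dist (g q.2) (g q.1) < w})
    (measurableSet_lt ((hg.comp measurable_snd).dist (hg.comp measurable_fst)) measurable_const)

lemma exists_measurableSet_le_measure_preimage_ball [IsFiniteMeasure μ] {g : α → Y}
    (hg : Measurable g) {w : ℝ} (hw : 0 < w) {β : ℝ≥0∞} (hβ : β ≠ 0) :
    ∃ m ≠ 0, m ≠ ∞ ∧ ∃ U, MeasurableSet U ∧ μ Uᶜ < β ∧ ∀ x ∈ U, m ≤ μ (g ⁻¹' ball (g x) w) := by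
  obtain ⟨m, hm0, hm, hmβ⟩ := exists_measure_setOf_lt_lt_of_ae_pos
    (measurable_measure_preimage_ball (μ := μ) hg w)
    ((ae_pos_measure_preimage_of_mem_nhds hg.aemeasurable).mono fun x hx =>
      hx _ (ball_mem_nhds _ hw)) hβ
  refine ⟨m, hm0, hm, _, measurableSet_le measurable_const (measurable_measure_preimage_ball hg w),
    ?_, fun x hx => hx⟩
  simpa only [Set.compl_ofPred, not_le] using hmβ

theorem exists_measurableSet_forall_ge_dist_lt_dist_add [IsFiniteMeasure μ] {u : ℕ → α → Y}
    {g : α → Y} (hu : ∀ n, Measurable (u n)) (hg : Measurable g) {w : ℝ} (hw : 0 < w)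
    (h : ∀ᵐ q ∂μ.prod μ, ∀ᶠ n in atTop, dist (u n q.1) (u n q.2) < dist (g q.1) (g q.2) + w)
    {β : ℝ≥0∞} (hβ : β ≠ 0) :
    ∃ N, ∃ M, MeasurableSet M ∧ μ Mᶜ < β ∧
      ∀ x ∈ M, ∀ y ∈ M, ∀ n ≥ N, dist (u n x) (u n y) < dist (g x) (g y) + 4 * w := by
  have hβ2 : β / 2 ≠ 0 := (ENNReal.half_pos hβ).ne'
  obtain ⟨m, hm0, hm, U, hU, hUβ, hUm⟩ :=
    exists_measurableSet_le_measure_preimage_ball (μ := μ) hg hw hβ2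
  set P : ℕ → α × α → Prop := fun n q => dist (u n q.1) (u n q.2) < dist (g q.1) (g q.2) + w
  have hP (n : ℕ) : MeasurableSet {q | P n q} :=
    measurableSet_lt (((hu n).comp measurable_fst).dist ((hu n).comp measurable_snd))
      (((hg.comp measurable_fst).dist (hg.comp measurable_snd)).add_const w)
  have hm2 : m / 2 ≠ 0 := (ENNReal.half_pos hm0).ne'
  obtain ⟨N, hN⟩ := exists_measure_setOf_exists_ge_not_lt hP h (mul_ne_zero hβ2 hm2)
  set t := {q | ∃ n ≥ N, ¬P n q}
  have ht : MeasurableSet t := measurableSet_setOf_exists_ge_not hP N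
  set G := {x | μ (Prod.mk x ⁻¹' t) < m / 2}
  have hGβ : μ Gᶜ < β / 2 := by
    simp only [G, Set.compl_ofPred, not_lt]
    exact (measure_setOf_le_measure_prodMk_preimage_le_div (μ := μ) ht hm2
      (ENNReal.div_ne_top hm two_ne_zero)).trans_lt (ENNReal.div_lt_of_lt_mul hN)
  refine ⟨N, U ∩ G, hU.inter (measurable_measure_prodMk_left ht measurableSet_Iio), ?_, ?_⟩
  · calc μ (U ∩ G)ᶜ ≤ μ Uᶜ + μ Gᶜ := measure_compl_inter_le U G
      _ < β / 2 + β / 2 := ENNReal.add_lt_add hUβ hGβ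
      _ = β := ENNReal.add_halves β
  rintro x ⟨hxU, hxG⟩ y ⟨-, hyG⟩ n hn
  obtain ⟨z, hz, hxz, hyz⟩ := exists_mem_notMem_notMem_of_measure_add_lt
    ((ENNReal.add_lt_add hxG hyG).trans_le ((ENNReal.add_halves m).trans_le (hUm x hxU)))
  simp only [t, Set.mem_preimage, Set.mem_ofPred_eq, not_exists, not_and, not_not] at hxz hyz
  exact dist_lt_dist_add_of_dist_lt_dist_add (hxz n hn) (hyz n hn) (mem_ball'.1 hz)

end Pseudometric

section Equicontinuity

variable {X : Type*} [PseudoMetricSpace X] [MeasurableSpace X] {μ : Measure X}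

/-- The paper's μ-equicontinuity of a family, with the large sets only required to be measurable;
`MeasureEquicontinuous.exists_isClosed` recovers closed ones. -/
def MeasureEquicontinuous {ι Y : Type*} [PseudoMetricSpace Y] (μ : Measure X) (u : ι → X → Y) :
    Prop :=
  ∀ β : ℝ≥0∞, β ≠ 0 → ∀ ε > 0, ∃ K, MeasurableSet K ∧ μ Kᶜ < β ∧
    ∃ δ > 0, ∀ x ∈ K, ∀ y ∈ K, dist x y < δ → ∀ i, dist (u i x) (u i y) < ε

namespace MeasureEquicontinuous

variable {ι Y : Type*} [PseudoMetricSpace Y] {u v : ι → X → Y}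

theorem congr_ae [Countable ι] (h : MeasureEquicontinuous μ u) (huv : ∀ i, u i =ᵐ[μ] v i) :
    MeasureEquicontinuous μ v := by
  intro β hβ ε hε
  obtain ⟨K, hK, hKβ, δ, hδ, hKδ⟩ := h β hβ ε hε
  set S := (toMeasurable μ {x | ¬∀ i, u i x = v i x})ᶜ
  have hS : μ Sᶜ = 0 := by
    rw [compl_compl, measure_toMeasurable]
    exact ae_iff.1 (ae_all_iff.2 huv)
  have huvS {x} (hx : x ∈ S) (i : ι) : u i x = v i x :=
    not_not.1 (fun hne => hx (subset_toMeasurable μ _ hne)) i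
  refine ⟨K ∩ S, hK.inter (measurableSet_toMeasurable μ _).compl,
    (measure_compl_inter_le K S).trans_lt (by rwa [hS, add_zero]), δ, hδ, ?_⟩
  rintro x ⟨hxK, hxS⟩ y ⟨hyK, hyS⟩ hxy i
  rw [← huvS hxS, ← huvS hyS]
  exact hKδ x hxK y hyK hxy i

theorem exists_isClosed [BorelSpace X] [IsFiniteMeasure μ]
    (h : MeasureEquicontinuous μ u) {β : ℝ≥0∞} (hβ : β ≠ 0) {ε : ℝ} (hε : 0 < ε) :
    ∃ K, IsClosed K ∧ μ Kᶜ < β ∧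
      ∃ δ > 0, ∀ x ∈ K, ∀ y ∈ K, dist x y < δ → ∀ i, dist (u i x) (u i y) < ε := by
  obtain ⟨M, hM, hMβ, δ, hδ, hMδ⟩ := h β hβ ε hε
  obtain ⟨K, hKM, hK, hKβ⟩ := hM.exists_isClosed_measure_compl_lt hMβ
  exact ⟨K, hK, hKβ, δ, hδ, fun x hx y hy => hMδ x (hKM hx) y (hKM hy)⟩

end MeasureEquicontinuous

variable [CompactSpace X] [BorelSpace X] [IsFiniteMeasure μ]
  {E : Type*} [NormedAddCommGroup E] [NormedSpace ℝ E] {p : ℝ≥0∞}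

theorem measureEquicontinuous_of_finite {ι : Type*} [Fintype ι] (hp0 : p ≠ 0) (hp : p ≠ ∞)
    {u : ι → X → E} (hu : ∀ i, MemLp (u i) p μ) : MeasureEquicontinuous μ u := by
  intro β hβ ε hε
  obtain ⟨K, hK, hKβ, hcont⟩ :=
    (memLp_pi_iff.2 hu).exists_isClosed_measure_compl_lt_continuousOn hp0 hp hβ
  obtain ⟨δ, hδ, hKδ⟩ := Metric.uniformContinuousOn_iff.1
    (hK.isCompact.uniformContinuousOn_of_continuous hcont) ε hε
  exact ⟨K, hK.measurableSet, hKβ, δ, hδ, fun x hx y hy hxy i =>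
    (dist_le_pi_dist (fun i => u i x) (fun i => u i y) i).trans_lt (hKδ x hx y hy hxy)⟩

theorem measureEquicontinuous_of_ae_tendsto_dist [SecondCountableTopology E] [MeasurableSpace E]
    [BorelSpace E] (hp0 : p ≠ 0) (hp : p ≠ ∞) {u : ℕ → X → E} {g : X → E}
    (hu : ∀ n, Measurable (u n)) (hg : Measurable g) (hu' : ∀ n, MemLp (u n) p μ)
    (hg' : MemLp g p μ)
    (h : ∀ᵐ q ∂μ.prod μ,
      Tendsto (fun n => dist (u n q.1) (u n q.2)) atTop (𝓝 (dist (g q.1) (g q.2)))) :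
    MeasureEquicontinuous μ u := by
  intro β hβ ε hε
  have hβ2 : β / 2 ≠ 0 := (ENNReal.half_pos hβ).ne'
  have hdom : ∀ᵐ q ∂μ.prod μ,
      ∀ᶠ n in atTop, dist (u n q.1) (u n q.2) < dist (g q.1) (g q.2) + ε / 8 :=
    h.mono fun q hq => hq.eventually (eventually_lt_nhds (by linarith))
  obtain ⟨N, M, hM, hMβ, hMdom⟩ :=
    exists_measurableSet_forall_ge_dist_lt_dist_add hu hg (by positivity) hdom hβ2
  obtain ⟨K, hK, hKβ, δ, hδ, hKδ⟩ := measureEquicontinuous_of_finite (μ := μ) hp0 hp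
    (u := fun i : Option (Fin N) => i.elim g fun n => u n) (fun i => by cases i <;> simp [hg', hu'])
    (β / 2) hβ2 (ε / 2) (half_pos hε)
  refine ⟨M ∩ K, hM.inter hK, ?_, δ, hδ, ?_⟩
  · calc μ (M ∩ K)ᶜ ≤ μ Mᶜ + μ Kᶜ := measure_compl_inter_le M K
      _ < β / 2 + β / 2 := ENNReal.add_lt_add hMβ hKβ
      _ = β := ENNReal.add_halves β
  rintro x ⟨hxM, hxK⟩ y ⟨hyM, hyK⟩ hxy n
  obtain hn | hn := lt_or_ge n N
  · exact (hKδ x hxK y hyK hxy (some ⟨n, hn⟩)).trans (half_lt_self hε)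
  · have hg_xy := hKδ x hxK y hyK hxy none
    have hu_xy := hMdom x hxM y hyM n hn
    dsimp only [Option.elim] at hg_xy
    linarith

end Equicontinuity

theorem stmt18_general {X : Type*} [MetricSpace X] [CompactSpace X] [MeasurableSpace X]
    [BorelSpace X] (μ : Measure X) [IsProbabilityMeasure μ] (T : X ≃ₜ X)
    (hT : MeasurePreserving T μ μ) (f : X → ℝ) (hf : MemLp f 2 μ)
    (a : ℕ → ℕ)
    (hae : ∀ᵐ p ∂(μ.prod μ), Tendsto
      (fun n => |f ((⇑T)^[a n] p.1) - f ((⇑T)^[a n] p.2)|) atTop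
      (𝓝 (|f p.1 - f p.2|))) :
    ∀ τ > (0 : ℝ), ∀ ε > (0 : ℝ), ∃ K : Set X, IsCompact K ∧
      μ K > ENNReal.ofReal (1 - τ) ∧ ∃ δ > (0 : ℝ),
      ∀ x ∈ K, ∀ y ∈ K, dist x y < δ →
        ∀ n : ℕ, |f ((⇑T)^[a n] x) - f ((⇑T)^[a n] y)| < ε := by
  intro τ hτ ε hε
  set F := hf.1.mk f
  have hF : Measurable F := hf.1.stronglyMeasurable_mk.measurable
  have hFp : MemLp F 2 μ := hf.ae_eq hf.1.ae_eq_mk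
  have horbit : ∀ᵐ x ∂μ, ∀ k, f (T^[k] x) = F (T^[k] x) := hT.ae_forall_iterate_eq hf.1.ae_eq_mk
  have haeF : ∀ᵐ q ∂μ.prod μ, Tendsto (fun n => dist (F (T^[a n] q.1)) (F (T^[a n] q.2)))
      atTop (𝓝 (dist (F q.1) (F q.2))) := by
    filter_upwards [hae, Measure.quasiMeasurePreserving_fst.ae horbit,
      Measure.quasiMeasurePreserving_snd.ae horbit] with q hq h₁ h₂
    have e₁ : f q.1 = F q.1 := h₁ 0
    have e₂ : f q.2 = F q.2 := h₂ 0
    simpa only [Real.dist_eq, ← h₁, ← h₂, ← e₁, ← e₂] using hq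
  have hequi : MeasureEquicontinuous μ fun n => f ∘ T^[a n] :=
    (measureEquicontinuous_of_ae_tendsto_dist two_ne_zero ENNReal.ofNat_ne_top
      (fun n => hF.comp (T.continuous.measurable.iterate _)) hF
      (fun n => hFp.comp_measurePreserving (hT.iterate _)) hFp haeF).congr_ae
      fun n => horbit.mono fun x hx => (hx (a n)).symm
  obtain ⟨K, hK, hKτ, δ, hδ, hKδ⟩ := hequi.exists_isClosed (β := min (ENNReal.ofReal τ) 1)
    (lt_min (ENNReal.ofReal_pos.2 hτ) one_pos).ne' hε
  refine ⟨K, hK.isCompact, ofReal_one_sub_lt_of_measure_compl_lt hK.measurableSet hτ.le hKτ, δ,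
    hδ, fun x hx y hy hxy n => ?_⟩
  rw [← Real.dist_eq]
  exact hKδ x hx y hy hxy n

theorem stmt18 {X : Type*} [MetricSpace X] [CompactSpace X] [MeasurableSpace X]
    [BorelSpace X] (μ : Measure X) [IsProbabilityMeasure μ] (T : X ≃ₜ X)
    (hT : MeasurePreserving T μ μ) (f : X → ℝ) (hf : MemLp f 2 μ)
    (a : ℕ → ℕ) (ha : StrictMono a)
    (hae : ∀ᵐ p ∂(μ.prod μ), Tendsto
      (fun n => |f ((⇑T)^[a n] p.1) - f ((⇑T)^[a n] p.2)|) atTop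
      (𝓝 (|f p.1 - f p.2|))) :
    ∀ τ > (0 : ℝ), ∀ ε > (0 : ℝ), ∃ K : Set X, IsCompact K ∧
      μ K > ENNReal.ofReal (1 - τ) ∧ ∃ δ > (0 : ℝ),
      ∀ x ∈ K, ∀ y ∈ K, dist x y < δ →
        ∀ n : ℕ, |f ((⇑T)^[a n] x) - f ((⇑T)^[a n] y)| < ε :=
  stmt18_general μ T hT f hf a hae
end

section
/- Let (X,d) be a compact metric space and T : X → X a homeomorphism. Then (X,T) is uniformly rigid if and only if there exists an infinite subset A ⊆ ℕ such that the family {T^a : a ∈ A} is uniformly equicontinuous on X. -/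
open MeasureTheory Filter Topology

theorem stmt19 {X : Type*} [MetricSpace X] [CompactSpace X] (T : X ≃ₜ X) :
    (∃ n : ℕ → ℕ, StrictMono n ∧
      Tendsto (fun k => ⨆ x : X, dist ((⇑T)^[n k] x) x) atTop (𝓝 0)) ↔
    (∃ A : Set ℕ, A.Infinite ∧ ∀ ε > 0, ∃ δ > 0, ∀ x y : X, dist x y < δ →
      ∀ a ∈ A, dist ((⇑T)^[a] x) ((⇑T)^[a] y) < ε) := by
  constructor
  · rintro ⟨n, hmono, htend⟩
    refine ⟨Set.range n, Set.infinite_range_of_injective hmono.injective, ?_⟩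
    intro ε hε
    have hε3 : (0:ℝ) < ε/3 := by linarith
    rw [Metric.tendsto_atTop] at htend
    obtain ⟨K, hK⟩ := htend (ε/3) hε3
    have hfin : ∀ M : ℕ, ∃ δ > (0:ℝ), ∀ k < M, ∀ x y : X, dist x y < δ →
        dist ((⇑T)^[n k] x) ((⇑T)^[n k] y) < ε := by
      intro M
      induction M with
      | zero => exact ⟨1, one_pos, fun k hk => absurd hk (Nat.not_lt_zero k)⟩
      | succ M ih =>
        obtain ⟨δ, hδ, hδ'⟩ := ih
        have hc : UniformContinuous ((⇑T)^[n M]) :=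
          CompactSpace.uniformContinuous_of_continuous (T.continuous.iterate _)
        rw [Metric.uniformContinuous_iff] at hc
        obtain ⟨δ', hδ'pos, hδ''⟩ := hc ε hε
        refine ⟨min δ δ', lt_min hδ hδ'pos, fun k hk x y hxy => ?_⟩
        rcases Nat.lt_succ_iff_lt_or_eq.mp hk with h | h
        · exact hδ' k h x y (hxy.trans_le (min_le_left _ _))
        · subst h; exact hδ'' (hxy.trans_le (min_le_right _ _))
    obtain ⟨δ, hδ, hδ'⟩ := hfin K
    refine ⟨min δ (ε/3), lt_min hδ hε3, fun x y hxy a ha => ?_⟩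
    obtain ⟨k, rfl⟩ := ha
    rcases lt_or_ge k K with h | h
    · exact hδ' k h x y (hxy.trans_le (min_le_left _ _))
    · have hsup := hK k h
      rw [Real.dist_eq, sub_zero] at hsup
      have hbdd : BddAbove (Set.range fun x : X => dist ((⇑T)^[n k] x) x) := by
        refine ⟨Metric.diam (Set.univ : Set X), ?_⟩
        rintro r ⟨z, rfl⟩
        exact Metric.dist_le_diam_of_mem isCompact_univ.isBounded trivial trivial
      have h1 : dist ((⇑T)^[n k] x) x < ε/3 :=
        lt_of_le_of_lt ((le_ciSup hbdd x).trans (le_abs_self _)) hsup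
      have h2 : dist ((⇑T)^[n k] y) y < ε/3 :=
        lt_of_le_of_lt ((le_ciSup hbdd y).trans (le_abs_self _)) hsup
      have hxy' : dist x y < ε/3 := hxy.trans_le (min_le_right _ _)
      calc dist ((⇑T)^[n k] x) ((⇑T)^[n k] y)
          ≤ dist ((⇑T)^[n k] x) x + dist x y + dist y ((⇑T)^[n k] y) :=
            dist_triangle4 _ _ _ _
        _ < ε/3 + ε/3 + ε/3 := by
            rw [dist_comm y] at *; exact add_lt_add (add_lt_add h1 hxy') h2
        _ = ε := by ring
  · rintro ⟨A, hA, hAe⟩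
    have hA' : (setOf (· ∈ A)).Infinite := hA
    have key : ∀ N : ℕ, ∀ ε > (0:ℝ), ∃ m, N < m ∧ ∀ y : X, dist ((⇑T)^[m] y) y < ε := by
      intro N ε hε
      obtain ⟨δ, hδ, hδ'⟩ := hAe (ε/3) (by linarith)
      obtain ⟨t, htfin, htcov⟩ :=
        (Metric.totallyBounded_iff.mp (isCompact_univ : IsCompact (Set.univ : Set X)).totallyBounded) δ hδ
      haveI := htfin.fintype
      set g : ℕ → (t → X) := fun j c => (⇑T)^[Nat.nth (· ∈ A) j] (c : X) with hg
      obtain ⟨L, φ, hφ, hconv⟩ := CompactSpace.tendsto_subseq g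
      have hcauchy := hconv.cauchySeq
      rw [Metric.cauchySeq_iff'] at hcauchy
      obtain ⟨M, hM⟩ := hcauchy (ε/3) (by linarith)
      set a := Nat.nth (· ∈ A) (φ M) with ha
      set q := max M (N + a + 1) with hqdef
      set b := Nat.nth (· ∈ A) (φ q) with hb
      have hq : M ≤ q := le_max_left _ _
      have hqb : q ≤ b := le_trans (hφ.le_apply) ((Nat.nth_strictMono hA').le_apply)
      have hNab : N + a + 1 ≤ b := le_trans (le_max_right _ _) hqb
      have hab : a ≤ b := by omega
      refine ⟨b - a, by omega, fun y => ?_⟩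
      set x := (⇑T.symm)^[a] y with hx
      have hTx : (⇑T)^[a] x = y := by
        have hli : Function.LeftInverse ⇑T ⇑T.symm := T.apply_symm_apply
        exact hli.iterate a y
      obtain ⟨c, hct, hcx⟩ : ∃ c ∈ t, x ∈ Metric.ball c δ := by
        have := htcov (Set.mem_univ x)
        simpa using this
      have haA : a ∈ A := Nat.nth_mem_of_infinite hA' (φ M)
      have hbA : b ∈ A := Nat.nth_mem_of_infinite hA' (φ q)
      have hd : dist x c < δ := Metric.mem_ball.mp hcx
      have h1 : dist ((⇑T)^[b] x) ((⇑T)^[b] c) < ε/3 := hδ' x c hd b hbA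
      have h3 : dist ((⇑T)^[a] c) ((⇑T)^[a] x) < ε/3 :=
        hδ' c x (by rw [dist_comm]; exact hd) a haA
      have h2 : dist ((⇑T)^[b] c) ((⇑T)^[a] c) < ε/3 := by
        have hMq := hM q hq
        have := dist_le_pi_dist ((g ∘ φ) q) ((g ∘ φ) M) ⟨c, hct⟩
        calc dist ((⇑T)^[b] c) ((⇑T)^[a] c)
            = dist ((g ∘ φ) q ⟨c, hct⟩) ((g ∘ φ) M ⟨c, hct⟩) := rfl
          _ ≤ dist ((g ∘ φ) q) ((g ∘ φ) M) := dist_le_pi_dist _ _ _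
          _ < ε/3 := hMq
      have heq : (⇑T)^[b - a] y = (⇑T)^[b] x := by
        rw [← hTx, ← Function.iterate_add_apply]
        congr 1
        omega
      calc dist ((⇑T)^[b - a] y) y
          = dist ((⇑T)^[b] x) ((⇑T)^[a] x) := by rw [heq, hTx]
        _ ≤ dist ((⇑T)^[b] x) ((⇑T)^[b] c) + dist ((⇑T)^[b] c) ((⇑T)^[a] c)
            + dist ((⇑T)^[a] c) ((⇑T)^[a] x) := dist_triangle4 _ _ _ _
        _ < ε/3 + ε/3 + ε/3 := add_lt_add (add_lt_add h1 h2) h3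
        _ = ε := by ring
    have key' : ∀ N k : ℕ, ∃ m, N < m ∧ ∀ y : X, dist ((⇑T)^[m] y) y < 1/((k:ℝ)+1) :=
      fun N k => key N (1/((k:ℝ)+1)) (by positivity)
    choose F hF1 hF2 using key'
    set n : ℕ → ℕ := fun k => Nat.rec (F 0 0) (fun k ih => F ih (k+1)) k with hn
    have hnsucc : ∀ k, n (k+1) = F (n k) (k+1) := fun k => rfl
    have hmono : StrictMono n := by
      apply strictMono_nat_of_lt_succ
      intro k
      rw [hnsucc]
      exact hF1 (n k) (k+1)
    have hbound : ∀ k, ∀ y : X, dist ((⇑T)^[n k] y) y < 1/((k:ℝ)+1) := by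
      intro k
      cases k with
      | zero => exact hF2 0 0
      | succ k => exact hF2 (n k) (k+1)
    refine ⟨n, hmono, ?_⟩
    have h0le : ∀ k, 0 ≤ ⨆ x : X, dist ((⇑T)^[n k] x) x :=
      fun k => Real.iSup_nonneg fun x => dist_nonneg
    have hle : ∀ k, (⨆ x : X, dist ((⇑T)^[n k] x) x) ≤ 1/((k:ℝ)+1) := by
      intro k
      rcases isEmpty_or_nonempty X with hX | hX
      · rw [Real.iSup_of_isEmpty]; positivity
      · exact ciSup_le fun x => (hbound k x).le
    exact squeeze_zero h0le hle tendsto_one_div_add_atTop_nhds_zero_nat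
end
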